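/- Let γ > 0, Δ > 0, R_S > 0. The coefficient σ₁ = Σ_{k=0}^{1} (−1)^k C(1,k)/(1−2k) equals 2, so the n = 1 shock-speed constant is C₁ = γ² · 2⁰ · Δ · R_S^{3/2} / (3 σ₁) = γ²Δ R_S^{3/2}/6. The function L(t) = ((9/2) C₁ t)^{2/9} satisfies L(0) = 0, is differentiable on (0,∞) with L'(t) = C₁ · L(t)^{−7/2} for all t > 0, and L(T) = R_S holds exactly for T = (4/3) R_S³ / (γ²Δ). Hence the n = 1 black-hole lifetime is T_BH = (4/3) R_S³/(γ²Δ), proportional to the cube of the black-hole mass. -/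

import Mathlib

open Real Finset

/-- The `n = 1` shock-speed constant `C₁ = γ²Δ R_S^{3/2}/6`. -/
noncomputable def Cone (γ Δ RS : ℝ) : ℝ := γ ^ 2 * Δ * RS ^ ((3 : ℝ) / 2) / 6

/-- The `n = 1` shock location `L(t) = ((9/2) C₁ t)^{2/9}`. -/
noncomputable def Lone (γ Δ RS t : ℝ) : ℝ :=
  ((9 / 2) * Cone γ Δ RS * t) ^ ((2 : ℝ) / 9)

/-- Separating variables in `L' = C L^{-m}`, `L^m dL = C dt`, gives `L^{m+1} = (m + 1) C t`. -/
theorem hasDerivAt_rpow_inv_solves_power_law {C m t : ℝ} (hC : 0 < C) (hm : 0 < m + 1)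
    (ht : 0 < t) :
    HasDerivAt (fun s => ((m + 1) * C * s) ^ (m + 1)⁻¹)
      (C * (((m + 1) * C * t) ^ (m + 1)⁻¹) ^ (-m)) t := by
  have hbase : 0 < (m + 1) * C * t := by positivity
  have hlin : HasDerivAt (fun s => (m + 1) * C * s) ((m + 1) * C) t := by
    simpa using (hasDerivAt_id t).const_mul ((m + 1) * C)
  convert hlin.rpow_const (p := (m + 1)⁻¹) (Or.inl hbase.ne') using 1
  rw [← rpow_mul hbase.le, show (m + 1)⁻¹ * -m = (m + 1)⁻¹ - 1 by field_simp; ring]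
  field_simp

lemma Cone_pos {γ Δ RS : ℝ} (hγ : 0 < γ) (hΔ : 0 < Δ) (hRS : 0 < RS) : 0 < Cone γ Δ RS := by
  unfold Cone
  have := rpow_pos_of_pos hRS ((3 : ℝ) / 2)
  positivity

lemma Lone_zero (γ Δ RS : ℝ) : Lone γ Δ RS 0 = 0 := by
  rw [Lone, mul_zero, zero_rpow (by norm_num)]

lemma Lone_eq_power_law (γ Δ RS : ℝ) :
    Lone γ Δ RS = fun t => ((7 / 2 + 1) * Cone γ Δ RS * t) ^ ((7 : ℝ) / 2 + 1)⁻¹ := by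
  funext t
  rw [Lone]
  norm_num

lemma hasDerivAt_Lone {γ Δ RS t : ℝ} (hγ : 0 < γ) (hΔ : 0 < Δ) (hRS : 0 < RS) (ht : 0 < t) :
    HasDerivAt (Lone γ Δ RS) (Cone γ Δ RS * Lone γ Δ RS t ^ (-(7 : ℝ) / 2)) t := by
  rw [Lone_eq_power_law, neg_div]
  exact hasDerivAt_rpow_inv_solves_power_law (Cone_pos hγ hΔ hRS) (by norm_num) ht

lemma Lone_lifetime {γ Δ RS : ℝ} (hγ : 0 < γ) (hΔ : 0 < Δ) (hRS : 0 < RS) :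
    Lone γ Δ RS ((4 / 3) * RS ^ 3 / (γ ^ 2 * Δ)) = RS := by
  have hpow : RS ^ ((3 : ℝ) / 2) * RS ^ 3 = RS ^ ((9 : ℝ) / 2) := by
    rw [← rpow_natCast RS 3, ← rpow_add hRS]
    norm_num
  have harg : 9 / 2 * Cone γ Δ RS * (4 / 3 * RS ^ 3 / (γ ^ 2 * Δ)) = RS ^ ((9 : ℝ) / 2) := by
    rw [Cone, ← hpow]
    field_simp
    ring
  rw [Lone, harg, show (2 : ℝ) / 9 = ((9 : ℝ) / 2)⁻¹ by norm_num,
    rpow_rpow_inv hRS.le (by norm_num)]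

/-- For `n = 1`: the coefficient `σ₁ = Σ_{k=0}^{1} (−1)^k C(1,k)/(1−2k)` equals
`2`, so `C₁ = γ²·2⁰·Δ·R_S^{3/2}/(3σ₁) = γ²Δ R_S^{3/2}/6`; the shock trajectory
`L(t) = ((9/2)C₁ t)^{2/9}` starts at the centre, solves `L' = C₁ L^{−7/2}`, and
reaches the horizon `L = R_S` exactly at `T = (4/3) R_S³/(γ²Δ)`: the `n = 1`
black-hole lifetime is cubic in the mass. -/
theorem black_hole_lifetime_n_one
    (γ Δ RS : ℝ) (hγ : 0 < γ) (hΔ : 0 < Δ) (hRS : 0 < RS) :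
    (∑ k ∈ Finset.range 2,
        (-1 : ℝ) ^ k * ((Nat.choose 1 k : ℕ) : ℝ) / (1 - 2 * (k : ℝ))) = 2 ∧
    γ ^ 2 * 2 ^ (0 : ℕ) * Δ * RS ^ ((3 : ℝ) / 2) /
        (3 * ∑ k ∈ Finset.range 2,
          (-1 : ℝ) ^ k * ((Nat.choose 1 k : ℕ) : ℝ) / (1 - 2 * (k : ℝ))) =
      Cone γ Δ RS ∧
    Lone γ Δ RS 0 = 0 ∧
    (∀ t, 0 < t → HasDerivAt (fun t' => Lone γ Δ RS t')
      (Cone γ Δ RS * (Lone γ Δ RS t) ^ (-(7 : ℝ) / 2)) t) ∧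
    Lone γ Δ RS ((4 / 3) * RS ^ 3 / (γ ^ 2 * Δ)) = RS := by
  have hσ : (∑ k ∈ Finset.range 2,
      (-1 : ℝ) ^ k * ((Nat.choose 1 k : ℕ) : ℝ) / (1 - 2 * (k : ℝ))) = 2 := by
    norm_num [Finset.sum_range_succ]
  refine ⟨hσ, ?_, Lone_zero γ Δ RS, fun t ht => hasDerivAt_Lone hγ hΔ hRS ht,
    Lone_lifetime hγ hΔ hRS⟩
  rw [hσ, Cone]
  ring
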